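/- arXiv:2111.12246 — 3 statements merged into one kernel-verified Lean document; each statement's English description precedes it below -/
import Mathlib

section
/- Let a = {a₁,a₂} and b = {b₁,b₂} be unordered pairs in ℝᵐ with averages aₐ = (a₁+a₂)/2, bₐ = (b₁+b₂)/2 and symmetric parts a_s = {±(a₁-a₂)/2}, b_s = {±(b₁-b₂)/2}. Then 𝒢(a,b)² = 2|aₐ - bₐ|² + 𝒢(a_s, b_s)². In particular 𝒢(a_s, b_s) ≤ 𝒢(a,b). -/
/-- The metric `𝒢` on unordered pairs of points of `ℝᵐ` (ordered-pair representative). -/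
noncomputable def pairG {m : ℕ}
    (a b : EuclideanSpace ℝ (Fin m) × EuclideanSpace ℝ (Fin m)) : ℝ :=
  min (Real.sqrt (‖a.1 - b.1‖ ^ 2 + ‖a.2 - b.2‖ ^ 2))
      (Real.sqrt (‖a.1 - b.2‖ ^ 2 + ‖a.2 - b.1‖ ^ 2))

lemma min_sqrt_eq (x y : ℝ) : min (Real.sqrt x) (Real.sqrt y) = Real.sqrt (min x y) := by
  rcases le_total x y with h | h
  · rw [min_eq_left (Real.sqrt_le_sqrt h), min_eq_left h]
  · rw [min_eq_right (Real.sqrt_le_sqrt h), min_eq_right h]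

lemma norm_sq_inner {m : ℕ} (x : EuclideanSpace ℝ (Fin m)) :
    ‖x‖ ^ 2 = inner ℝ x x := by
  rw [real_inner_self_eq_norm_sq]

/-- For unordered pairs `a = {a₁,a₂}`, `b = {b₁,b₂}` in `ℝᵐ` with averages
`aₐ = (a₁+a₂)/2`, `bₐ = (b₁+b₂)/2` and symmetric parts `a_s = {±(a₁-a₂)/2}`,
`b_s = {±(b₁-b₂)/2}`, one has `𝒢(a,b)² = 2|aₐ - bₐ|² + 𝒢(a_s, b_s)²`;
in particular `𝒢(a_s, b_s) ≤ 𝒢(a,b)`. -/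
theorem stmt_2 {m : ℕ} (a₁ a₂ b₁ b₂ : EuclideanSpace ℝ (Fin m)) :
    pairG (a₁, a₂) (b₁, b₂) ^ 2 =
      2 * ‖(2:ℝ)⁻¹ • (a₁ + a₂) - (2:ℝ)⁻¹ • (b₁ + b₂)‖ ^ 2 +
        pairG ((2:ℝ)⁻¹ • (a₁ - a₂), (2:ℝ)⁻¹ • (a₂ - a₁))
              ((2:ℝ)⁻¹ • (b₁ - b₂), (2:ℝ)⁻¹ • (b₂ - b₁)) ^ 2 ∧
    pairG ((2:ℝ)⁻¹ • (a₁ - a₂), (2:ℝ)⁻¹ • (a₂ - a₁))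
          ((2:ℝ)⁻¹ • (b₁ - b₂), (2:ℝ)⁻¹ • (b₂ - b₁)) ≤ pairG (a₁, a₂) (b₁, b₂) := by
  set A : ℝ := ‖a₁ - b₁‖ ^ 2 + ‖a₂ - b₂‖ ^ 2 with hA
  set B : ℝ := ‖a₁ - b₂‖ ^ 2 + ‖a₂ - b₁‖ ^ 2 with hB
  set k : ℝ := 2 * ‖(2:ℝ)⁻¹ • (a₁ + a₂) - (2:ℝ)⁻¹ • (b₁ + b₂)‖ ^ 2 with hk
  set C : ℝ := ‖(2:ℝ)⁻¹ • (a₁ - a₂) - (2:ℝ)⁻¹ • (b₁ - b₂)‖ ^ 2 +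
      ‖(2:ℝ)⁻¹ • (a₂ - a₁) - (2:ℝ)⁻¹ • (b₂ - b₁)‖ ^ 2 with hC
  set D : ℝ := ‖(2:ℝ)⁻¹ • (a₁ - a₂) - (2:ℝ)⁻¹ • (b₂ - b₁)‖ ^ 2 +
      ‖(2:ℝ)⁻¹ • (a₂ - a₁) - (2:ℝ)⁻¹ • (b₁ - b₂)‖ ^ 2 with hD
  have hAC : A = k + C := by
    simp only [hA, hk, hC, norm_sq_inner, inner_sub_left, inner_sub_right, inner_add_left,
      inner_add_right, inner_smul_left, inner_smul_right, real_inner_comm a₁ a₂,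
      real_inner_comm a₁ b₁, real_inner_comm a₁ b₂, real_inner_comm a₂ b₁,
      real_inner_comm a₂ b₂, real_inner_comm b₁ b₂, RCLike.conj_to_real]
    ring
  have hBD : B = k + D := by
    simp only [hB, hk, hD, norm_sq_inner, inner_sub_left, inner_sub_right, inner_add_left,
      inner_add_right, inner_smul_left, inner_smul_right, real_inner_comm a₁ a₂,
      real_inner_comm a₁ b₁, real_inner_comm a₁ b₂, real_inner_comm a₂ b₁,
      real_inner_comm a₂ b₂, real_inner_comm b₁ b₂, RCLike.conj_to_real]
    ring
  have hk0 : 0 ≤ k := by positivity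
  have hC0 : 0 ≤ C := by positivity
  have hD0 : 0 ≤ D := by positivity
  have h1 : pairG (a₁, a₂) (b₁, b₂) = Real.sqrt (min A B) := min_sqrt_eq A B
  have h2 : pairG ((2:ℝ)⁻¹ • (a₁ - a₂), (2:ℝ)⁻¹ • (a₂ - a₁))
      ((2:ℝ)⁻¹ • (b₁ - b₂), (2:ℝ)⁻¹ • (b₂ - b₁)) = Real.sqrt (min C D) := min_sqrt_eq C D
  have hmin : min A B = k + min C D := by
    rw [hAC, hBD, min_add_add_left]
  constructor
  · rw [h1, h2, Real.sq_sqrt (le_min (hAC ▸ add_nonneg hk0 hC0) (hBD ▸ add_nonneg hk0 hD0)),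
      Real.sq_sqrt (le_min hC0 hD0), hmin]
  · rw [h1, h2]
    exact Real.sqrt_le_sqrt (by rw [hmin]; linarith [min_le_min_left k (le_refl (min C D)), le_add_of_nonneg_left (a := min C D) hk0])
end

section
/- Let a > 0 and let g : ℝ → ℝᵐ, h : ℝ → ℝᵐ be C² functions on an interval I with ‖g − a t e₁‖_{C²(I)} < δ and ‖h − a t e₁‖_{C²(I)} < δ where e₁ is the first standard basis vector and δ < a/4 is sufficiently small (depending on a). Then the function t ↦ g(t)·h(t) is strictly convex on I, and hence vanishes at most twice on I. -/
set_option maxHeartbeats 1000000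

open scoped RealInnerProductSpace

/-- Middle zero of a strictly convex function gives a contradiction. -/
lemma strictConvexOn_mid_zero {I : Set ℝ} {f : ℝ → ℝ} (hf : StrictConvexOn ℝ I f)
    {x y z : ℝ} (hx : x ∈ I) (hz : z ∈ I) (h1 : x < y) (h2 : y < z)
    (fx : f x = 0) (fy : f y = 0) (fz : f z = 0) : False := by
  have hzx : (0:ℝ) < z - x := by linarith
  have hA : 0 < (z - y) / (z - x) := div_pos (by linarith) hzx
  have hB : 0 < (y - x) / (z - x) := div_pos (by linarith) hzx
  have hsum : (z - y) / (z - x) + (y - x) / (z - x) = 1 := by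
    rw [← add_div, show z - y + (y - x) = z - x by ring]
    exact div_self hzx.ne'
  have hne : x ≠ z := by linarith
  have key := hf.2 hx hz hne hA hB hsum
  simp only [smul_eq_mul] at key
  have hcomb : (z - y) / (z - x) * x + (y - x) / (z - x) * z = y := by
    field_simp
    ring
  rw [hcomb, fx, fy, fz] at key
  linarith

/-- Any three pairwise distinct zeros of a strictly convex function give a contradiction. -/
lemma strictConvexOn_three_zeros {I : Set ℝ} {f : ℝ → ℝ} (hf : StrictConvexOn ℝ I f)
    {x y z : ℝ} (hx : x ∈ I) (hy : y ∈ I) (hz : z ∈ I)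
    (hxy : x ≠ y) (hxz : x ≠ z) (hyz : y ≠ z)
    (fx : f x = 0) (fy : f y = 0) (fz : f z = 0) : False := by
  rcases hxy.lt_or_gt with h1 | h1
  · rcases hyz.lt_or_gt with h2 | h2
    · exact strictConvexOn_mid_zero hf hx hz h1 h2 fx fy fz
    · rcases hxz.lt_or_gt with h3 | h3
      · exact strictConvexOn_mid_zero hf hx hy h3 h2 fx fz fy
      · exact strictConvexOn_mid_zero hf hz hy h3 h1 fz fx fy
  · rcases hyz.lt_or_gt with h2 | h2
    · rcases hxz.lt_or_gt with h3 | h3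
      · exact strictConvexOn_mid_zero hf hy hz h1 h3 fy fx fz
      · exact strictConvexOn_mid_zero hf hy hx h2 h3 fy fz fx
    · exact strictConvexOn_mid_zero hf hz hx h2 h1 fz fy fx

/-- A strictly convex function vanishes at most twice. -/
lemma strictConvexOn_zeros_encard {I : Set ℝ} {f : ℝ → ℝ} (hf : StrictConvexOn ℝ I f) :
    Set.encard {t ∈ I | f t = 0} ≤ 2 := by
  set S := {t ∈ I | f t = 0} with hS
  by_cases hsub : S.Subsingleton
  · exact le_trans (Set.encard_le_one_iff.mpr fun a b ha hb => hsub ha hb) one_le_two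
  · rw [Set.not_subsingleton_iff] at hsub
    obtain ⟨x, hx, y, hy, hxy⟩ := hsub
    have hss : S ⊆ {x, y} := by
      intro z hz
      by_contra hzz
      simp only [Set.mem_insert_iff, Set.mem_singleton_iff, not_or] at hzz
      exact strictConvexOn_three_zeros hf hx.1 hy.1 hz.1 hxy (Ne.symm hzz.1) (Ne.symm hzz.2)
        hx.2 hy.2 hz.2
    calc S.encard ≤ ({x, y} : Set ℝ).encard := Set.encard_le_encard hss
      _ = 2 := Set.encard_pair hxy

/-- An algebraic identity for inner products. -/
lemma inner_decomp {E : Type*} [NormedAddCommGroup E] [InnerProductSpace ℝ E] (u v w : E) :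
    (inner ℝ u v : ℝ) = inner ℝ (u - w) v + inner ℝ w (v - w) + inner ℝ w w := by
  simp only [inner_sub_left, inner_sub_right]
  ring

/-- The first standard basis vector `e₁` of `ℝᵐ`. -/
noncomputable def e1 (m : ℕ) (hm : 0 < m) : EuclideanSpace ℝ (Fin m) :=
  EuclideanSpace.single ⟨0, hm⟩ 1

/-- If `g, h : ℝ → ℝᵐ` are `C²` on an interval `I` (inside `[-1,1]`, where the two-valued
function lives) with `‖g − a t e₁‖_{C²(I)} < δ` and `‖h − a t e₁‖_{C²(I)} < δ` for `δ < a/4`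
sufficiently small (depending on `a`), then `t ↦ g(t)·h(t)` is strictly convex on `I` and
hence vanishes at most twice on `I`. -/
theorem stmt_10 (m : ℕ) (hm : 0 < m) (a : ℝ) (ha : 0 < a) :
    ∃ δ₀ : ℝ, 0 < δ₀ ∧ δ₀ ≤ a / 4 ∧ ∀ δ : ℝ, 0 < δ → δ < δ₀ →
      ∀ I : Set ℝ, Convex ℝ I → I ⊆ Set.Icc (-1) 1 →
      ∀ g h : ℝ → EuclideanSpace ℝ (Fin m),
        ContDiffOn ℝ 2 g I → ContDiffOn ℝ 2 h I →
        (∀ t ∈ I, ‖g t - (a * t) • e1 m hm‖ < δ ∧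
          ‖derivWithin g I t - a • e1 m hm‖ < δ ∧
          ‖derivWithin (derivWithin g I) I t‖ < δ) →
        (∀ t ∈ I, ‖h t - (a * t) • e1 m hm‖ < δ ∧
          ‖derivWithin h I t - a • e1 m hm‖ < δ ∧
          ‖derivWithin (derivWithin h I) I t‖ < δ) →
        StrictConvexOn ℝ I (fun t => (inner ℝ (g t) (h t) : ℝ)) ∧
        Set.encard {t ∈ I | (inner ℝ (g t) (h t) : ℝ) = 0} ≤ 2 := by
  refine ⟨a / 8, by positivity, by linarith, ?_⟩
  intro δ hδ hδ8 I hI hI1 g h hg hh hgb hhb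
  have e1n : ‖e1 m hm‖ = 1 := by
    simp [e1, EuclideanSpace.norm_single]
  -- reduce to proving strict convexity
  suffices hsc : StrictConvexOn ℝ I (fun t => (inner ℝ (g t) (h t) : ℝ)) by
    exact ⟨hsc, strictConvexOn_zeros_encard hsc⟩
  by_cases hsub : I.Subsingleton
  · exact ⟨hI, fun x hx y hy hxy => absurd (hsub hx hy) hxy⟩
  -- interior of I is nonempty
  have hint : (interior I).Nonempty := by
    rw [Set.not_subsingleton_iff] at hsub
    obtain ⟨x, hx, y, hy, hxy⟩ := hsub
    rcases hxy.lt_or_gt with hlt | hlt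
    · have : Set.Ioo x y ⊆ interior I :=
        interior_maximal (Set.Ioo_subset_Icc_self.trans (hI.ordConnected.out hx hy)) isOpen_Ioo
      exact ⟨(x + y) / 2, this ⟨by linarith, by linarith⟩⟩
    · have : Set.Ioo y x ⊆ interior I :=
        interior_maximal (Set.Ioo_subset_Icc_self.trans (hI.ordConnected.out hy hx)) isOpen_Ioo
      exact ⟨(x + y) / 2, this ⟨by linarith, by linarith⟩⟩
  have hud : UniqueDiffOn ℝ I := uniqueDiffOn_convex hI hint
  set gp := derivWithin g I with hgp
  set hp := derivWithin h I with hhp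
  set gpp := derivWithin gp I with hgpp
  set hpp := derivWithin hp I with hhpp
  have hg1 : ContDiffOn ℝ 1 gp I := hg.derivWithin hud (by norm_num)
  have hh1 : ContDiffOn ℝ 1 hp I := hh.derivWithin hud (by norm_num)
  set F : ℝ → ℝ := fun t => (inner ℝ (g t) (h t) : ℝ) with hF
  set F' : ℝ → ℝ := fun t => (inner ℝ (g t) (hp t) : ℝ) + (inner ℝ (gp t) (h t) : ℝ) with hF'
  -- derivatives at interior points
  have Hg : ∀ x ∈ interior I, HasDerivAt g (gp x) x := fun x hx =>
    ((hg.differentiableOn (by norm_num) x (interior_subset hx)).hasDerivWithinAt).hasDerivAt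
      (mem_interior_iff_mem_nhds.mp hx)
  have Hh : ∀ x ∈ interior I, HasDerivAt h (hp x) x := fun x hx =>
    ((hh.differentiableOn (by norm_num) x (interior_subset hx)).hasDerivWithinAt).hasDerivAt
      (mem_interior_iff_mem_nhds.mp hx)
  have Hgp : ∀ x ∈ interior I, HasDerivAt gp (gpp x) x := fun x hx =>
    ((hg1.differentiableOn (by norm_num) x (interior_subset hx)).hasDerivWithinAt).hasDerivAt
      (mem_interior_iff_mem_nhds.mp hx)
  have Hhp : ∀ x ∈ interior I, HasDerivAt hp (hpp x) x := fun x hx =>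
    ((hh1.differentiableOn (by norm_num) x (interior_subset hx)).hasDerivWithinAt).hasDerivAt
      (mem_interior_iff_mem_nhds.mp hx)
  have HF : ∀ x ∈ interior I, HasDerivAt F (F' x) x := fun x hx =>
    (Hg x hx).inner ℝ (Hh x hx)
  have HF' : ∀ x ∈ interior I, HasDerivAt F'
      (((inner ℝ (g x) (hpp x) : ℝ) + (inner ℝ (gp x) (hp x) : ℝ)) +
        ((inner ℝ (gp x) (hp x) : ℝ) + (inner ℝ (gpp x) (h x) : ℝ))) x := fun x hx =>
    ((Hg x hx).inner ℝ (Hhp x hx)).add ((Hgp x hx).inner ℝ (Hh x hx))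
  apply strictConvexOn_of_deriv2_pos hI ((hg.inner ℝ hh).continuousOn)
  intro x hx
  have hxI : x ∈ I := interior_subset hx
  -- compute the second derivative
  have hderivF : deriv F =ᶠ[nhds x] F' :=
    Filter.eventuallyEq_of_mem (isOpen_interior.mem_nhds hx) fun y hy => (HF y hy).deriv
  have h2 : deriv^[2] F x = ((inner ℝ (g x) (hpp x) : ℝ) + (inner ℝ (gp x) (hp x) : ℝ)) +
      ((inner ℝ (gp x) (hp x) : ℝ) + (inner ℝ (gpp x) (h x) : ℝ)) := by
    show deriv (deriv F) x = _
    rw [hderivF.deriv_eq]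
    exact (HF' x hx).deriv
  rw [h2]
  -- estimates
  obtain ⟨hg0, hg1', hg2⟩ := hgb x hxI
  obtain ⟨hh0, hh1', hh2⟩ := hhb x hxI
  have hx1 : |x| ≤ 1 := abs_le.mpr ⟨(hI1 hxI).1, (hI1 hxI).2⟩
  have hwn : ‖(a * x) • e1 m hm‖ ≤ a := by
    rw [norm_smul, e1n, mul_one, Real.norm_eq_abs, abs_mul, abs_of_pos ha]
    calc a * |x| ≤ a * 1 := by nlinarith [abs_nonneg x]
      _ = a := mul_one a
  have hvn : ‖a • e1 m hm‖ = a := by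
    rw [norm_smul, e1n, mul_one, Real.norm_eq_abs, abs_of_pos ha]
  have hgn : ‖g x‖ ≤ a + δ := by
    have := norm_sub_norm_le (g x) ((a * x) • e1 m hm)
    linarith
  have hhn : ‖h x‖ ≤ a + δ := by
    have := norm_sub_norm_le (h x) ((a * x) • e1 m hm)
    linarith
  have hhpn : ‖hp x‖ ≤ a + δ := by
    have := norm_sub_norm_le (hp x) (a • e1 m hm)
    linarith
  -- inner product of the first derivatives
  have hmain : (inner ℝ (gp x) (hp x) : ℝ) ≥ a ^ 2 - δ * (a + δ) - a * δ := by
    have hdec := inner_decomp (gp x) (hp x) (a • e1 m hm)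
    have h1 : |(inner ℝ (gp x - a • e1 m hm) (hp x) : ℝ)| ≤ δ * (a + δ) := by
      refine le_trans (abs_real_inner_le_norm _ _) ?_
      have h0 : (0:ℝ) ≤ ‖hp x‖ := norm_nonneg _
      nlinarith [norm_nonneg (gp x - a • e1 m hm)]
    have h2' : |(inner ℝ (a • e1 m hm) (hp x - a • e1 m hm) : ℝ)| ≤ a * δ := by
      refine le_trans (abs_real_inner_le_norm _ _) ?_
      rw [hvn]
      nlinarith [norm_nonneg (hp x - a • e1 m hm)]
    have h3 : (inner ℝ (a • e1 m hm) (a • e1 m hm) : ℝ) = a ^ 2 := by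
      rw [real_inner_self_eq_norm_sq, hvn]
    rw [hdec, h3]
    have := abs_le.mp h1
    have := abs_le.mp h2'
    linarith
  have hcross1 : |(inner ℝ (g x) (hpp x) : ℝ)| ≤ (a + δ) * δ := by
    refine le_trans (abs_real_inner_le_norm _ _) ?_
    nlinarith [norm_nonneg (g x), norm_nonneg (hpp x)]
  have hcross2 : |(inner ℝ (gpp x) (h x) : ℝ)| ≤ δ * (a + δ) := by
    refine le_trans (abs_real_inner_le_norm _ _) ?_
    nlinarith [norm_nonneg (gpp x), norm_nonneg (h x)]
  have a1 := abs_le.mp hcross1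
  have a2 := abs_le.mp hcross2
  nlinarith [hδ, hδ8, ha]
end

section
/- Let a > 0 and suppose w, v : [ξ, ζ] → ℝᵐ are C¹ with |w(t) − w(ξ) − a(t−ξ)e₁| ≤ Cδ(t−ξ) and |v(t) − v(ξ) − a(t−ξ)e₁| ≤ Cδ(t−ξ) on [ξ,ζ], w(ξ)·v(ξ) = 0, and |(w(ξ)+v(ξ))·e₁ + a(ζ−ξ)| ≤ (Cδ/a)|w(ξ)^⊥+v(ξ)^⊥| + Cδ(ζ−ξ), where η^⊥ = η − (η·e₁)e₁. Then for δ sufficiently small (depending on universal constants and a), ∫_ξ^ζ |w−v|² dt ≤ 72 ∫_ξ^ζ |w+v|² dt. -/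
lemma aux_sq' (x y : ℝ) : (x + y) ^ 2 ≤ 2 * x ^ 2 + 2 * y ^ 2 := by
  nlinarith [sq_nonneg (x - y)]

lemma aux_lb' (N M k : ℝ) (hN : 0 ≤ N) (hM : 0 ≤ M) (hk : 0 ≤ k) (h : N ≤ M + k) :
    N ^ 2 / 2 - k ^ 2 ≤ M ^ 2 := by
  nlinarith [sq_nonneg (M - k)]

lemma aux_hx' (a c : ℝ) (ha : 0 < a) (hc : 0 ≤ c) (h : 20 * c ≤ a) :
    2 * (a ^ 2 + 3 * (a * c)) ^ 2 + 96 * (a ^ 2 * c ^ 2) ≤ 12 * a ^ 4 := by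
  have m1 : a ^ 3 * c ≤ a ^ 4 / 20 := by
    nlinarith [mul_le_mul_of_nonneg_left h (pow_nonneg ha.le 3)]
  have m2 : a ^ 2 * c ^ 2 ≤ a ^ 4 / 400 := by
    have h20 : (20 * c) ^ 2 ≤ a ^ 2 := pow_le_pow_left₀ (by positivity) h 2
    nlinarith [mul_le_mul_of_nonneg_left h20 (sq_nonneg a)]
  nlinarith [m1, m2, pow_nonneg ha.le 4]

lemma aux_hy' (a c : ℝ) (ha : 0 < a) (hc : 0 ≤ c) (h : 20 * c ≤ a) :
    2 * (a + c) ^ 2 ≤ 36 * a ^ 2 := by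
  have m1 : a * c ≤ a ^ 2 / 20 := by
    nlinarith [mul_le_mul_of_nonneg_left h ha.le]
  have m2 : c ^ 2 ≤ a ^ 2 / 400 := by
    have h20 : (20 * c) ^ 2 ≤ a ^ 2 := pow_le_pow_left₀ (by positivity) h 2
    nlinarith [h20]
  nlinarith [m1, m2, sq_nonneg a]

/-- The core scalar inequality. -/
lemma key_ineq (a c T Q S P : ℝ) (ha : 0 < a) (hc : 0 < c) (hcA : 20 * c ≤ a)
    (hT : 0 ≤ T) (hQ : 0 ≤ Q) (hS : 0 ≤ S)
    (habs : a * |P + a * T| ≤ c * Q + a * (c * T))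
    (hsle : S ≤ |P| + Q) :
    (S + 2 * (c * T)) ^ 2 * T ≤
      72 * ((P + a * T) ^ 2 * T / 2 + a ^ 2 * T ^ 3 / 6 - 4 / 3 * c ^ 2 * T ^ 3
        + Q ^ 2 * T / 2) := by
  have hp : a * |P| ≤ a * (a * T) + (c * Q + a * (c * T)) := by
    have h1 : |P| ≤ |P + a * T| + a * T := by
      calc |P| = |(P + a * T) - a * T| := by ring_nf
        _ ≤ |P + a * T| + |a * T| := abs_sub _ _
        _ = |P + a * T| + a * T := by rw [abs_of_nonneg (mul_nonneg ha.le hT)]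
    nlinarith [mul_le_mul_of_nonneg_left h1 ha.le]
  have hSb : a * S ≤ a * (a * T) + c * Q + a * (c * T) + a * Q := by
    nlinarith [mul_le_mul_of_nonneg_left hsle ha.le, hp]
  have hA : (S + 2 * (c * T)) ^ 2 ≤ (12 * a ^ 2 - 96 * c ^ 2) * T ^ 2 + 36 * Q ^ 2 := by
    have h1 : a * (S + 2 * (c * T)) ≤ a ^ 2 * T + 3 * (a * (c * T)) + c * Q + a * Q := by
      nlinarith [hSb]
    have hnn : 0 ≤ a * (S + 2 * (c * T)) := by positivity
    have hkey : (a * (S + 2 * (c * T))) ^ 2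
        ≤ (a ^ 2 * T + 3 * (a * (c * T)) + c * Q + a * Q) ^ 2 :=
      pow_le_pow_left₀ hnn h1 2
    have hx := aux_hx' a c ha hc.le hcA
    have hy := aux_hy' a c ha hc.le hcA
    have hsq := aux_sq' (a ^ 2 * T + 3 * (a * (c * T))) (c * Q + a * Q)
    have hxT := mul_le_mul_of_nonneg_right hx (sq_nonneg T)
    have hyQ := mul_le_mul_of_nonneg_right hy (sq_nonneg Q)
    have h3 : a ^ 2 * ((S + 2 * (c * T)) ^ 2)
        ≤ a ^ 2 * ((12 * a ^ 2 - 96 * c ^ 2) * T ^ 2 + 36 * Q ^ 2) := by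
      nlinarith [hkey, hsq, hxT, hyQ]
    exact le_of_mul_le_mul_left h3 (by positivity)
  calc (S + 2 * (c * T)) ^ 2 * T
      ≤ ((12 * a ^ 2 - 96 * c ^ 2) * T ^ 2 + 36 * Q ^ 2) * T :=
        mul_le_mul_of_nonneg_right hA hT
    _ ≤ 72 * ((P + a * T) ^ 2 * T / 2 + a ^ 2 * T ^ 3 / 6 - 4 / 3 * c ^ 2 * T ^ 3
        + Q ^ 2 * T / 2) := by nlinarith [mul_nonneg (sq_nonneg (P + a * T)) hT]

set_option maxHeartbeats 1000000 in
/-- Quantitative integral comparison on the interval where the pairing of two nearly-linear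
branches switches: if `w, v : [ξ,ζ] → ℝᵐ` are `C¹` with
`|w(t) − w(ξ) − a(t−ξ)e₁| ≤ Cδ(t−ξ)`, `|v(t) − v(ξ) − a(t−ξ)e₁| ≤ Cδ(t−ξ)`,
`w(ξ)·v(ξ) = 0`, and
`|((w(ξ)+v(ξ))·e₁) + a(ζ−ξ)| ≤ (Cδ/a)|w(ξ)^⊥+v(ξ)^⊥| + Cδ(ζ−ξ)`
(where `η^⊥ = η − (η·e₁)e₁`), then for `δ` sufficiently small (depending on the constants
and `a`), `∫_ξ^ζ |w−v|² ≤ 72 ∫_ξ^ζ |w+v|²`. -/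
theorem stmt_11 (m : ℕ) (hm : 0 < m) (a Cc : ℝ) (ha : 0 < a) (hCc : 0 < Cc) :
    ∃ δ₀ > 0, ∀ δ : ℝ, 0 < δ → δ < δ₀ →
      ∀ ξ ζ : ℝ, ξ ≤ ζ →
      ∀ w v : ℝ → EuclideanSpace ℝ (Fin m),
        ContDiffOn ℝ 1 w (Set.Icc ξ ζ) → ContDiffOn ℝ 1 v (Set.Icc ξ ζ) →
        (∀ t ∈ Set.Icc ξ ζ, ‖w t - w ξ - (a * (t - ξ)) • e1 m hm‖ ≤ Cc * δ * (t - ξ)) →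
        (∀ t ∈ Set.Icc ξ ζ, ‖v t - v ξ - (a * (t - ξ)) • e1 m hm‖ ≤ Cc * δ * (t - ξ)) →
        (inner ℝ (w ξ) (v ξ) : ℝ) = 0 →
        |(inner ℝ (w ξ + v ξ) (e1 m hm) : ℝ) + a * (ζ - ξ)| ≤
          (Cc * δ / a) *
            ‖(w ξ - (inner ℝ (w ξ) (e1 m hm) : ℝ) • e1 m hm) +
              (v ξ - (inner ℝ (v ξ) (e1 m hm) : ℝ) • e1 m hm)‖ + Cc * δ * (ζ - ξ) →
        ∫ t in ξ..ζ, ‖w t - v t‖ ^ 2 ≤ 72 * ∫ t in ξ..ζ, ‖w t + v t‖ ^ 2 := by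
  refine ⟨a / (20 * Cc), by positivity, ?_⟩
  intro δ hδ hδ0 ξ ζ hle w v hw hv hwlin hvlin horth hmain
  set E : EuclideanSpace ℝ (Fin m) := e1 m hm with hE_def
  have heN : ‖E‖ = 1 := by
    simp [hE_def, e1, EuclideanSpace.norm_single]
  have heI : (inner ℝ E E : ℝ) = 1 := by
    rw [real_inner_self_eq_norm_sq, heN]; norm_num
  set T : ℝ := ζ - ξ with hT_def
  have hT0 : 0 ≤ T := sub_nonneg.2 hle
  set c : ℝ := Cc * δ with hc_def
  have hc0 : 0 < c := by positivity
  have hcA : 20 * c ≤ a := by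
    rw [lt_div_iff₀ (by positivity)] at hδ0
    nlinarith
  set s : EuclideanSpace ℝ (Fin m) := w ξ + v ξ with hs_def
  set p : ℝ := (inner ℝ s E : ℝ) with hp_def
  set q : EuclideanSpace ℝ (Fin m) := s - p • E with hq_def
  set Q : ℝ := ‖q‖ with hQ_def
  have hQ0 : 0 ≤ Q := norm_nonneg _
  have hqeq : (w ξ - (inner ℝ (w ξ) E : ℝ) • E) + (v ξ - (inner ℝ (v ξ) E : ℝ) • E) = q := by
    have hpadd : p = (inner ℝ (w ξ) E : ℝ) + (inner ℝ (v ξ) E : ℝ) := by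
      rw [hp_def, hs_def, inner_add_left]
    rw [hq_def, hpadd, add_smul, hs_def]
    abel
  rw [hqeq] at hmain
  have hqE : (inner ℝ q E : ℝ) = 0 := by
    rw [hq_def, inner_sub_left, real_inner_smul_left, heI, ← hp_def]; ring
  have hgen : ∀ r : ℝ, ‖s + r • E‖ ^ 2 = (p + r) ^ 2 + Q ^ 2 := by
    intro r
    have hdec : s + r • E = (p + r) • E + q := by
      rw [hq_def, add_smul]; abel
    have hEq : (inner ℝ E q : ℝ) = 0 := by rw [real_inner_comm]; exact hqE
    rw [hdec, @norm_add_sq_real, real_inner_smul_left, hEq,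
        norm_smul, heN, Real.norm_eq_abs, mul_one, sq_abs]
    ring
  have hS : ‖w ξ - v ξ‖ = ‖s‖ := by
    have h1 : ‖w ξ - v ξ‖ ^ 2 = ‖s‖ ^ 2 := by
      rw [hs_def, @norm_add_sq_real, @norm_sub_sq_real, horth]; ring
    calc ‖w ξ - v ξ‖ = Real.sqrt (‖w ξ - v ξ‖ ^ 2) := (Real.sqrt_sq (norm_nonneg _)).symm
      _ = Real.sqrt (‖s‖ ^ 2) := by rw [h1]
      _ = ‖s‖ := Real.sqrt_sq (norm_nonneg _)
  have hsle : ‖s‖ ≤ |p| + Q := by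
    have hdec : s = p • E + q := by rw [hq_def]; abel
    calc ‖s‖ = ‖p • E + q‖ := by rw [← hdec]
      _ ≤ ‖p • E‖ + ‖q‖ := norm_add_le _ _
      _ = |p| + Q := by rw [norm_smul, heN, Real.norm_eq_abs, mul_one, hQ_def]
  have habs : a * |p + a * T| ≤ c * Q + a * (c * T) := by
    have h1 : a * |p + a * T| ≤ a * (c / a * Q + c * T) :=
      mul_le_mul_of_nonneg_left hmain ha.le
    have h2 : a * (c / a * Q + c * T) = c * Q + a * (c * T) := by
      field_simp
    rw [h2] at h1
    exact h1
  -- pointwise upper bound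
  have hub : ∀ t ∈ Set.Icc ξ ζ, ‖w t - v t‖ ^ 2 ≤ (‖s‖ + 2 * (c * T)) ^ 2 := by
    intro t ht
    have hu1 : t - ξ ≤ T := by rw [hT_def]; linarith [ht.2]
    have h1 : w t - v t =
        (w ξ - v ξ) + ((w t - w ξ - (a * (t - ξ)) • E) - (v t - v ξ - (a * (t - ξ)) • E)) := by
      abel
    have h2 : ‖w t - v t‖ ≤ ‖s‖ + 2 * (c * T) := by
      have h3 : ‖w t - v t‖ ≤ ‖w ξ - v ξ‖ +
          (‖w t - w ξ - (a * (t - ξ)) • E‖ + ‖v t - v ξ - (a * (t - ξ)) • E‖) := by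
        rw [h1]
        exact le_trans (norm_add_le _ _) (by gcongr; exact norm_sub_le _ _)
      have h4 := hwlin t ht
      have h5 := hvlin t ht
      have h6 : c * (t - ξ) ≤ c * T := mul_le_mul_of_nonneg_left hu1 hc0.le
      rw [hS] at h3
      linarith
    exact pow_le_pow_left₀ (norm_nonneg _) h2 2
  -- pointwise lower bound
  have hlb : ∀ t ∈ Set.Icc ξ ζ,
      ((p + 2 * a * (t - ξ)) ^ 2 + Q ^ 2) / 2 - (2 * c * (t - ξ)) ^ 2 ≤ ‖w t + v t‖ ^ 2 := by
    intro t ht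
    have hu0 : 0 ≤ t - ξ := sub_nonneg.2 ht.1
    have h1 : (w t + v t) - (s + (2 * a * (t - ξ)) • E) =
        (w t - w ξ - (a * (t - ξ)) • E) + (v t - v ξ - (a * (t - ξ)) • E) := by
      rw [hs_def, show (2 * a * (t - ξ)) = a * (t - ξ) + a * (t - ξ) by ring, add_smul]
      abel
    have h2 : ‖(w t + v t) - (s + (2 * a * (t - ξ)) • E)‖ ≤ 2 * (c * (t - ξ)) := by
      rw [h1]
      have h4 := hwlin t ht
      have h5 := hvlin t ht
      calc _ ≤ ‖w t - w ξ - (a * (t - ξ)) • E‖ + ‖v t - v ξ - (a * (t - ξ)) • E‖ :=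
            norm_add_le _ _
        _ ≤ 2 * (c * (t - ξ)) := by linarith
    have h3 : ‖s + (2 * a * (t - ξ)) • E‖ ≤ ‖w t + v t‖ + 2 * (c * (t - ξ)) := by
      calc ‖s + (2 * a * (t - ξ)) • E‖
          = ‖(w t + v t) - ((w t + v t) - (s + (2 * a * (t - ξ)) • E))‖ := by
            rw [sub_sub_cancel]
        _ ≤ ‖w t + v t‖ + ‖(w t + v t) - (s + (2 * a * (t - ξ)) • E)‖ := norm_sub_le _ _
        _ ≤ _ := by linarith
    have h4 := hgen (2 * a * (t - ξ))
    have h5 := aux_lb' ‖s + (2 * a * (t - ξ)) • E‖ ‖w t + v t‖ (2 * (c * (t - ξ)))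
      (norm_nonneg _) (norm_nonneg _) (by positivity) h3
    rw [h4] at h5
    have h6 : (2 * c * (t - ξ)) ^ 2 = (2 * (c * (t - ξ))) ^ 2 := by ring
    rw [h6]
    linarith
  -- integrability
  have huIcc : Set.uIcc ξ ζ = Set.Icc ξ ζ := Set.uIcc_of_le hle
  have hcw : ContinuousOn w (Set.Icc ξ ζ) := hw.continuousOn
  have hcv : ContinuousOn v (Set.Icc ξ ζ) := hv.continuousOn
  have hiU : IntervalIntegrable (fun t => ‖w t - v t‖ ^ 2) MeasureTheory.volume ξ ζ := by
    apply ContinuousOn.intervalIntegrable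
    rw [huIcc]
    exact ((hcw.sub hcv).norm).pow 2
  have hiL : IntervalIntegrable (fun t => ‖w t + v t‖ ^ 2) MeasureTheory.volume ξ ζ := by
    apply ContinuousOn.intervalIntegrable
    rw [huIcc]
    exact ((hcw.add hcv).norm).pow 2
  have hiP : IntervalIntegrable
      (fun t => ((p + 2 * a * (t - ξ)) ^ 2 + Q ^ 2) / 2 - (2 * c * (t - ξ)) ^ 2)
      MeasureTheory.volume ξ ζ := by
    apply Continuous.intervalIntegrable
    fun_prop
  -- upper integral bound
  have hUb : (∫ t in ξ..ζ, ‖w t - v t‖ ^ 2) ≤ (‖s‖ + 2 * (c * T)) ^ 2 * T := by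
    calc (∫ t in ξ..ζ, ‖w t - v t‖ ^ 2)
        ≤ ∫ _t in ξ..ζ, (‖s‖ + 2 * (c * T)) ^ 2 :=
          intervalIntegral.integral_mono_on hle hiU intervalIntegrable_const hub
      _ = (ζ - ξ) • (‖s‖ + 2 * (c * T)) ^ 2 := intervalIntegral.integral_const _
      _ = (‖s‖ + 2 * (c * T)) ^ 2 * T := by rw [smul_eq_mul, ← hT_def]; ring
  -- lower integral bound
  have hLb : (∫ t in ξ..ζ, (((p + 2 * a * (t - ξ)) ^ 2 + Q ^ 2) / 2 - (2 * c * (t - ξ)) ^ 2))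
      ≤ ∫ t in ξ..ζ, ‖w t + v t‖ ^ 2 :=
    intervalIntegral.integral_mono_on hle hiP hiL hlb
  -- value of the polynomial integral
  have hJ : (∫ t in ξ..ζ, (((p + 2 * a * (t - ξ)) ^ 2 + Q ^ 2) / 2 - (2 * c * (t - ξ)) ^ 2))
      = (p + a * T) ^ 2 * T / 2 + a ^ 2 * T ^ 3 / 6 - 4 / 3 * c ^ 2 * T ^ 3
        + Q ^ 2 * T / 2 := by
    have hcomp := intervalIntegral.integral_comp_sub_right
      (a := ξ) (b := ζ)
      (fun u => ((p + 2 * a * u) ^ 2 + Q ^ 2) / 2 - (2 * c * u) ^ 2) ξ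
    rw [hcomp, sub_self, ← hT_def]
    have hfun : (fun u : ℝ => ((p + 2 * a * u) ^ 2 + Q ^ 2) / 2 - (2 * c * u) ^ 2)
        = fun u => ((p ^ 2 + Q ^ 2) / 2) + ((2 * a * p) * u + (2 * a ^ 2 - 4 * c ^ 2) * u ^ 2) := by
      funext u; ring
    rw [hfun,
      intervalIntegral.integral_add intervalIntegrable_const
        (by apply Continuous.intervalIntegrable; fun_prop),
      intervalIntegral.integral_add (by apply Continuous.intervalIntegrable; fun_prop)
        (by apply Continuous.intervalIntegrable; fun_prop),
      intervalIntegral.integral_const, intervalIntegral.integral_const_mul,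
      intervalIntegral.integral_const_mul, integral_id, integral_pow]
    norm_num
    ring
  -- combine
  have hkey := key_ineq a c T Q ‖s‖ p ha hc0 hcA hT0 hQ0 (norm_nonneg _) habs hsle
  calc (∫ t in ξ..ζ, ‖w t - v t‖ ^ 2)
      ≤ (‖s‖ + 2 * (c * T)) ^ 2 * T := hUb
    _ ≤ 72 * ((p + a * T) ^ 2 * T / 2 + a ^ 2 * T ^ 3 / 6 - 4 / 3 * c ^ 2 * T ^ 3
        + Q ^ 2 * T / 2) := hkey
    _ = 72 * (∫ t in ξ..ζ, (((p + 2 * a * (t - ξ)) ^ 2 + Q ^ 2) / 2 - (2 * c * (t - ξ)) ^ 2)) := by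
        rw [hJ]
    _ ≤ 72 * ∫ t in ξ..ζ, ‖w t + v t‖ ^ 2 := by linarith
end
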